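/- arXiv:2504.04878 — 5 statements merged into one kernel-verified Lean document; each statement's English description precedes it below -/
import Mathlib

section
/- Let λ₁,...,λ₆ ∈ ℝ and let g₁₁, g₃₃, g₄₄, g₆₆ > 0. Set Λ := λ₁·A₁ + λ₂·A₂ + λ₃·A₃ + λ₄·A₄ + λ₅·A₅ + λ₆·A₆ and u := (λ₁/g₁₁)·A₁ + (λ₂/g₁₁)·A₂ + (λ₃/g₃₃)·A₃ + (λ₄/g₄₄)·A₄ + (λ₅/g₄₄)·A₅ + (λ₆/g₆₆)·A₆. Then the Frobenius pairing of the momentum with the commutator along the fiber direction vanishes: trace(Λ · (u·A₆ − A₆·u)ᵀ) = 0. (Hence along geodesics of any left-invariant metric diagonal in this basis with g₁₁ = g₂₂ and g₄₄ = g₅₅, the momentum component λ₆ and velocity component u⁶ are constant.) -/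
noncomputable section

open Matrix

/-- Basis of `se(3)`: translation generators. -/
def A₁ : Matrix (Fin 4) (Fin 4) ℝ :=
  !![0, 0, 0, 1; 0, 0, 0, 0; 0, 0, 0, 0; 0, 0, 0, 0]
def A₂ : Matrix (Fin 4) (Fin 4) ℝ :=
  !![0, 0, 0, 0; 0, 0, 0, 1; 0, 0, 0, 0; 0, 0, 0, 0]
def A₃ : Matrix (Fin 4) (Fin 4) ℝ :=
  !![0, 0, 0, 0; 0, 0, 0, 0; 0, 0, 0, 1; 0, 0, 0, 0]
/-- Rotation generators: upper-left 3×3 blocks `[e_x]ₓ`, `[e_y]ₓ`, `[e_z]ₓ`. -/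
def A₄ : Matrix (Fin 4) (Fin 4) ℝ :=
  !![0, 0, 0, 0; 0, 0, -1, 0; 0, 1, 0, 0; 0, 0, 0, 0]
def A₅ : Matrix (Fin 4) (Fin 4) ℝ :=
  !![0, 0, 1, 0; 0, 0, 0, 0; -1, 0, 0, 0; 0, 0, 0, 0]
def A₆ : Matrix (Fin 4) (Fin 4) ℝ :=
  !![0, -1, 0, 0; 1, 0, 0, 0; 0, 0, 0, 0; 0, 0, 0, 0]

/-- `A₆` generates rotations about the `z`-axis, which act on the translations `A₁, A₂` and on
the rotations `A₄, A₅` as on `e_x, e_y`, by a quarter turn. -/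
theorem lie_A₆ (c₁ c₂ c₃ c₄ c₅ c₆ : ℝ) :
    ⁅c₁ • A₁ + c₂ • A₂ + c₃ • A₃ + c₄ • A₄ + c₅ • A₅ + c₆ • A₆, A₆⁆ =
      c₂ • A₁ - c₁ • A₂ + c₅ • A₄ - c₄ • A₅ := by
  rw [Ring.lie_def]
  ext i j
  fin_cases i <;> fin_cases j <;> simp [A₁, A₂, A₃, A₄, A₅, A₆]

/-- The basis is orthogonal for the Frobenius pairing, with `‖Aᵢ‖² = 1` for the translations and
`‖Aᵢ‖² = 2` for the rotations. -/
theorem trace_mul_transpose_lie_A₆ (l₁ l₂ l₃ l₄ l₅ l₆ c₁ c₂ c₄ c₅ : ℝ) :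
    trace ((l₁ • A₁ + l₂ • A₂ + l₃ • A₃ + l₄ • A₄ + l₅ • A₅ + l₆ • A₆) *
        (c₂ • A₁ - c₁ • A₂ + c₅ • A₄ - c₄ • A₅)ᵀ) =
      l₁ * c₂ - l₂ * c₁ + 2 * (l₄ * c₅ - l₅ * c₄) := by
  rw [← sum_hadamard_eq]
  simp [Fin.sum_univ_four, A₁, A₂, A₃, A₄, A₅, A₆]
  ring

theorem stmt_3_general (l₁ l₂ l₃ l₄ l₅ l₆ : ℝ) (g₁₁ g₃₃ g₄₄ g₆₆ : ℝ)
    (Lam u : Matrix (Fin 4) (Fin 4) ℝ)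
    (hLam : Lam = l₁ • A₁ + l₂ • A₂ + l₃ • A₃ + l₄ • A₄ + l₅ • A₅ + l₆ • A₆)
    (hu : u = (l₁ / g₁₁) • A₁ + (l₂ / g₁₁) • A₂ + (l₃ / g₃₃) • A₃ +
        (l₄ / g₄₄) • A₄ + (l₅ / g₄₄) • A₅ + (l₆ / g₆₆) • A₆) :
    Matrix.trace (Lam * (u * A₆ - A₆ * u)ᵀ) = 0 := by
  rw [← Ring.lie_def, hLam, hu, lie_A₆, trace_mul_transpose_lie_A₆]
  -- the quarter turn makes the pairing antisymmetric on the planes `⟨A₁, A₂⟩` and `⟨A₄, A₅⟩`,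
  -- on each of which the metric is isotropic
  ring

/-- The Frobenius pairing of the momentum `Λ` with the commutator
`⁅u, A₆⁆` of the Riemannian velocity `u = 𝒢⁻¹λ` with the fiber direction `A₆` vanishes:
this encodes the Poisson bracket computation `{𝔥_R, λ₆} = 0`, so the momentum component
`λ₆` and velocity component `u⁶` are constant along Riemannian geodesics of any
left-invariant metric diagonal in this basis with `g₁₁ = g₂₂` and `g₄₄ = g₅₅`. -/
theorem stmt_3 (l₁ l₂ l₃ l₄ l₅ l₆ : ℝ) (g₁₁ g₃₃ g₄₄ g₆₆ : ℝ)
    (hg₁₁ : 0 < g₁₁) (hg₃₃ : 0 < g₃₃) (hg₄₄ : 0 < g₄₄) (hg₆₆ : 0 < g₆₆)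
    (Lam u : Matrix (Fin 4) (Fin 4) ℝ)
    (hLam : Lam = l₁ • A₁ + l₂ • A₂ + l₃ • A₃ + l₄ • A₄ + l₅ • A₅ + l₆ • A₆)
    (hu : u = (l₁ / g₁₁) • A₁ + (l₂ / g₁₁) • A₂ + (l₃ / g₃₃) • A₃ +
        (l₄ / g₄₄) • A₄ + (l₅ / g₄₄) • A₅ + (l₆ / g₆₆) • A₆) :
    Matrix.trace (Lam * (u * A₆ - A₆ * u)ᵀ) = 0 :=
  stmt_3_general l₁ l₂ l₃ l₄ l₅ l₆ g₁₁ g₃₃ g₄₄ g₆₆ Lam u hLam hu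
end
end

section
/- Let λ₃, λ₄, λ₅ ∈ ℝ, let λ₁, λ₂, λ₆ ∈ ℝ, and let g₃₃, g₄₄ > 0. Set Λ := λ₁·A₁ + λ₂·A₂ + λ₃·A₃ + λ₄·A₄ + λ₅·A₅ + λ₆·A₆ and the sub-Riemannian horizontal velocity u := (λ₃/g₃₃)·A₃ + (λ₄/g₄₄)·A₄ + (λ₅/g₄₄)·A₅. Then u·A₆ − A₆·u = (λ₅/g₄₄)·A₄ − (λ₄/g₄₄)·A₅, and the Frobenius pairing vanishes: trace(Λ · (u·A₆ − A₆·u)ᵀ) = 0. -/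
/-!
Bracketing with the rotation generator `A₆` kills `A₃` and turns the `(A₄, A₅)`-plane by a
quarter turn, `A₄ ↦ -A₅`, `A₅ ↦ A₄`. Since the basis `A₁, …, A₆` is orthogonal for the
Frobenius pairing, the pairing of `Λ` with `[u, A₆]` is `2 (λ₄ λ₅ - λ₅ λ₄) / g₄₄ = 0`; the
cancellation uses that `A₄` and `A₅` carry the same weight `g₄₄`.
-/

noncomputable section

open Matrix

attribute [local instance] LieRing.ofAssociativeRing

theorem lie_A₃_A₆ : ⁅A₃, A₆⁆ = 0 := by
  rw [Ring.lie_def]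
  ext i j
  fin_cases i <;> fin_cases j <;> simp [A₃, A₆]

theorem lie_A₄_A₆ : ⁅A₄, A₆⁆ = -A₅ := by
  rw [Ring.lie_def]
  ext i j
  fin_cases i <;> fin_cases j <;> simp [A₄, A₅, A₆]

theorem lie_A₅_A₆ : ⁅A₅, A₆⁆ = A₄ := by
  rw [Ring.lie_def]
  ext i j
  fin_cases i <;> fin_cases j <;> simp [A₄, A₅, A₆]

theorem lie_horizontal_A₆ (a b c : ℝ) :
    ⁅a • A₃ + b • A₄ + c • A₅, A₆⁆ = c • A₄ - b • A₅ := by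
  simp only [add_lie, smul_lie, lie_A₃_A₆, lie_A₄_A₆, lie_A₅_A₆, smul_zero, zero_add, smul_neg]
  abel

theorem trace_mul_transpose_A₄ (l₁ l₂ l₃ l₄ l₅ l₆ : ℝ) :
    trace ((l₁ • A₁ + l₂ • A₂ + l₃ • A₃ + l₄ • A₄ + l₅ • A₅ + l₆ • A₆) * A₄ᵀ) = 2 * l₄ := by
  simp only [trace, diag_apply, mul_apply, transpose_apply, Fin.sum_univ_four]
  simp [A₁, A₂, A₃, A₄, A₅, A₆]
  ring

theorem trace_mul_transpose_A₅ (l₁ l₂ l₃ l₄ l₅ l₆ : ℝ) :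
    trace ((l₁ • A₁ + l₂ • A₂ + l₃ • A₃ + l₄ • A₄ + l₅ • A₅ + l₆ • A₆) * A₅ᵀ) = 2 * l₅ := by
  simp only [trace, diag_apply, mul_apply, transpose_apply, Fin.sum_univ_four]
  simp [A₁, A₂, A₃, A₄, A₅, A₆]
  ring

theorem stmt_4_general (l₃ l₄ l₅ : ℝ) (l₁ l₂ l₆ : ℝ) (g₃₃ g₄₄ : ℝ)
    (Lam u : Matrix (Fin 4) (Fin 4) ℝ)
    (hLam : Lam = l₁ • A₁ + l₂ • A₂ + l₃ • A₃ + l₄ • A₄ + l₅ • A₅ + l₆ • A₆)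
    (hu : u = (l₃ / g₃₃) • A₃ + (l₄ / g₄₄) • A₄ + (l₅ / g₄₄) • A₅) :
    u * A₆ - A₆ * u = (l₅ / g₄₄) • A₄ - (l₄ / g₄₄) • A₅ ∧
    Matrix.trace (Lam * (u * A₆ - A₆ * u)ᵀ) = 0 := by
  have hbracket : u * A₆ - A₆ * u = (l₅ / g₄₄) • A₄ - (l₄ / g₄₄) • A₅ := by
    rw [← Ring.lie_def, hu, lie_horizontal_A₆]
  refine ⟨hbracket, ?_⟩
  rw [hbracket, hLam, transpose_sub, transpose_smul, transpose_smul, mul_sub, mul_smul_comm,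
    mul_smul_comm, trace_sub, trace_smul, trace_smul, trace_mul_transpose_A₄,
    trace_mul_transpose_A₅, smul_eq_mul, smul_eq_mul]
  ring

/-- Sub-Riemannian case: for the horizontal velocity
`u = (λ₃/g₃₃)·A₃ + (λ₄/g₄₄)·A₄ + (λ₅/g₄₄)·A₅` (constrained to the distribution `Δ`
spanned by `A₃, A₄, A₅`) one has `u·A₆ − A₆·u = (λ₅/g₄₄)·A₄ − (λ₄/g₄₄)·A₅`, and the
Frobenius pairing of the momentum `Λ` with this commutator vanishes
(the Poisson bracket computation `{𝔥_SR, λ₆} = 0`). -/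
theorem stmt_4 (l₃ l₄ l₅ : ℝ) (l₁ l₂ l₆ : ℝ) (g₃₃ g₄₄ : ℝ)
    (hg₃₃ : 0 < g₃₃) (hg₄₄ : 0 < g₄₄)
    (Lam u : Matrix (Fin 4) (Fin 4) ℝ)
    (hLam : Lam = l₁ • A₁ + l₂ • A₂ + l₃ • A₃ + l₄ • A₄ + l₅ • A₅ + l₆ • A₆)
    (hu : u = (l₃ / g₃₃) • A₃ + (l₄ / g₄₄) • A₄ + (l₅ / g₄₄) • A₅) :
    u * A₆ - A₆ * u = (l₅ / g₄₄) • A₄ - (l₄ / g₄₄) • A₅ ∧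
    Matrix.trace (Lam * (u * A₆ - A₆ * u)ᵀ) = 0 :=
  stmt_4_general l₃ l₄ l₅ l₁ l₂ l₆ g₃₃ g₄₄ Lam u hLam hu
end
end

section
/- Let β ∈ (0, π) and α, γ ∈ [0, 2π), and set R := Rz(γ) · Ry(β) · Rz(α). Assume the rotation angle of R is less than π, i.e. trace(R) > −1. Then R₍₂,₁₎ = R₍₁,₂₎ if and only if α + γ = 0 or α + γ = 2π (i.e. if and only if α = −γ modulo 2π). Equivalently: the canonical coordinate c⁶ of R vanishes if and only if α = −γ. -/
/-!
Expanding the Euler product gives `R₍₂,₁₎ - R₍₁,₂₎ = (1 + cos β) sin (α + γ)` and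
`trace R + 1 = (1 + cos β)(1 + cos (α + γ))`. Both factors of the latter are nonnegative, so
`trace R > -1` makes both positive: the first lets us cancel `1 + cos β`, the second excludes
`cos (α + γ) = -1`, so that `sin (α + γ) = 0` forces `cos (α + γ) = 1`, i.e. `α + γ ∈ {0, 2π}`
on `[0, 4π)`.
-/

noncomputable section

open Real Matrix

/-- Rotation matrix about the z-axis. -/
def Rz (θ : ℝ) : Matrix (Fin 3) (Fin 3) ℝ :=
  !![cos θ, -sin θ, 0;
     sin θ,  cos θ, 0;
         0,      0, 1]

/-- Rotation matrix about the y-axis. -/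
def Ry (θ : ℝ) : Matrix (Fin 3) (Fin 3) ℝ :=
  !![ cos θ, 0, sin θ;
         0,  1,     0;
     -sin θ, 0, cos θ]

theorem Rz_mul_Ry_mul_Rz_apply_one_zero_sub_apply_zero_one (α β γ : ℝ) :
    (Rz γ * Ry β * Rz α) 1 0 - (Rz γ * Ry β * Rz α) 0 1 = (1 + cos β) * sin (α + γ) := by
  simp [Rz, Ry, Matrix.mul_apply, Fin.sum_univ_three, sin_add]
  ring

theorem trace_Rz_mul_Ry_mul_Rz_add_one (α β γ : ℝ) :
    trace (Rz γ * Ry β * Rz α) + 1 = (1 + cos β) * (1 + cos (α + γ)) := by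
  simp [Rz, Ry, trace_fin_three, cos_add]
  ring

theorem Real.cos_eq_one_iff_of_mem_Ico {x : ℝ} (hx : x ∈ Set.Ico 0 (4 * π)) :
    cos x = 1 ↔ x = 0 ∨ x = 2 * π := by
  obtain ⟨hx₀, hx₄⟩ := hx
  rcases lt_or_ge x (2 * π) with hx₂ | hx₂
  · rw [cos_eq_one_iff_of_lt_of_lt (by linarith [pi_pos]) hx₂]
    constructor
    · exact Or.inl
    · rintro (h | h)
      exacts [h, absurd h hx₂.ne]
  · rw [← cos_sub_two_pi, cos_eq_one_iff_of_lt_of_lt (by linarith [pi_pos]) (by linarith),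
      sub_eq_zero]
    constructor
    · exact Or.inr
    · rintro (h | h)
      exacts [absurd h (by linarith [pi_pos]), h]

theorem stmt_8_general (α β γ : ℝ)
    (hα : α ∈ Set.Ico 0 (2 * π)) (hγ : γ ∈ Set.Ico 0 (2 * π))
    (hq : Matrix.trace (Rz γ * Ry β * Rz α) > -1) :
    (Rz γ * Ry β * Rz α) 1 0 = (Rz γ * Ry β * Rz α) 0 1 ↔
      (α + γ = 0 ∨ α + γ = 2 * π) := by
  have hprod : 0 < (1 + cos β) * (1 + cos (α + γ)) := by
    rw [← trace_Rz_mul_Ry_mul_Rz_add_one]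
    linarith
  have hβ : 0 < 1 + cos β := pos_of_mul_pos_left hprod (by linarith [neg_one_le_cos (α + γ)])
  have hαγ : 0 < 1 + cos (α + γ) := pos_of_mul_pos_right hprod hβ.le
  have hsum : α + γ ∈ Set.Ico 0 (4 * π) := ⟨by linarith [hα.1, hγ.1], by linarith [hα.2, hγ.2]⟩
  rw [← sub_eq_zero, Rz_mul_Ry_mul_Rz_apply_one_zero_sub_apply_zero_one, mul_eq_zero,
    or_iff_right hβ.ne', sin_eq_zero_iff_cos_eq, or_iff_left (by linarith),
    cos_eq_one_iff_of_mem_Ico hsum]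

/-- For `β ∈ (0, π)`, `α, γ ∈ [0, 2π)`, and `R = Rz(γ)·Ry(β)·Rz(α)` with
rotation angle less than `π` (i.e. `trace R > −1`), the antisymmetric part vanishes,
`R₍₂,₁₎ = R₍₁,₂₎` (equivalently `c⁶ = 0`), if and only if `α + γ = 0` or `α + γ = 2π`,
i.e. iff `α = −γ` modulo `2π`.  This is the boxed equivalence in equation (4) of the
paper characterizing the section `σ` of `SE(3) → SE(3)/SO(2)`. -/
theorem stmt_8 (α β γ : ℝ) (hβ₀ : 0 < β) (hβπ : β < π)
    (hα : α ∈ Set.Ico 0 (2 * π)) (hγ : γ ∈ Set.Ico 0 (2 * π))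
    (hq : Matrix.trace (Rz γ * Ry β * Rz α) > -1) :
    (Rz γ * Ry β * Rz α) 1 0 = (Rz γ * Ry β * Rz α) 0 1 ↔
      (α + γ = 0 ∨ α + γ = 2 * π) :=
  stmt_8_general α β γ hα hγ hq
end
end

section
/- Let s be the 4×4 matrix with upper-left 3×3 block S := diag(1, −1, 1) (the orthogonal reflection through the xz-plane), entry (4,4) equal to 1, and zeros elsewhere. Then: (i) for all c₁,...,c₆ ∈ ℝ, s · (c₁·A₁ + c₂·A₂ + c₃·A₃ + c₄·A₄ + c₅·A₅ + c₆·A₆) · s⁻¹ = c₁·A₁ − c₂·A₂ + c₃·A₃ − c₄·A₄ + c₅·A₅ − c₆·A₆ (conjugation by s flips exactly the coefficients of A₂, A₄, A₆); and (ii) for all α ∈ ℝ, denoting by h_α the 4×4 matrix with upper-left 3×3 block Rz(α), entry (4,4) equal to 1, and zeros elsewhere, one has s · h_α · s⁻¹ = h_{−α}. -/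
noncomputable section

open Matrix

open Real

/-- The reflection through the xz-plane, embedded in `E(3) ⊂ GL(4)`:
upper-left 3×3 block `diag(1, −1, 1)`, entry (4,4) equal to 1, zeros elsewhere. -/
def sRefl : Matrix (Fin 4) (Fin 4) ℝ :=
  !![1,  0, 0, 0;
     0, -1, 0, 0;
     0,  0, 1, 0;
     0,  0, 0, 1]

/-- Rotation about the z-axis over angle `α`, embedded in `SE(3) ⊂ GL(4)`. -/
def hRot (α : ℝ) : Matrix (Fin 4) (Fin 4) ℝ :=
  !![cos α, -sin α, 0, 0;
     sin α,  cos α, 0, 0;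
         0,      0, 1, 0;
         0,      0, 0, 1]


/-! Conjugation by the diagonal matrix `sRefl` multiplies the `(i, j)` entry by the signs of
`i` and `j`, so it flips exactly the entries with one index equal to `1`, the `y`-axis. -/

theorem sRefl_eq_diagonal : sRefl = diagonal ![1, -1, 1, 1] := by
  ext i j
  fin_cases i <;> fin_cases j <;> simp [sRefl]

theorem diagonal_mul_mul_diagonal {n R : Type*} [Fintype n] [DecidableEq n] [CommSemiring R]
    (d : n → R) (X : Matrix n n R) :
    diagonal d * X * diagonal d = of fun i j => d i * d j * X i j := by
  ext i j
  simp only [mul_diagonal, diagonal_mul, of_apply]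
  ring

theorem sRefl_mul_self : sRefl * sRefl = 1 := by
  rw [sRefl_eq_diagonal, diagonal_mul_diagonal, ← diagonal_one]
  congr 1
  ext i
  fin_cases i <;> norm_num

theorem inv_sRefl : sRefl⁻¹ = sRefl :=
  inv_eq_left_inv sRefl_mul_self

theorem sRefl_mul_mul_sRefl (X : Matrix (Fin 4) (Fin 4) ℝ) :
    sRefl * X * sRefl = of fun i j => ![1, -1, 1, 1] i * ![1, -1, 1, 1] j * X i j := by
  rw [sRefl_eq_diagonal, diagonal_mul_mul_diagonal]

theorem sRefl_conj_A₁ : sRefl * A₁ * sRefl = A₁ := by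
  rw [sRefl_mul_mul_sRefl]; ext i j; fin_cases i <;> fin_cases j <;> simp [A₁]

theorem sRefl_conj_A₂ : sRefl * A₂ * sRefl = -A₂ := by
  rw [sRefl_mul_mul_sRefl]; ext i j; fin_cases i <;> fin_cases j <;> simp [A₂]

theorem sRefl_conj_A₃ : sRefl * A₃ * sRefl = A₃ := by
  rw [sRefl_mul_mul_sRefl]; ext i j; fin_cases i <;> fin_cases j <;> simp [A₃]

theorem sRefl_conj_A₄ : sRefl * A₄ * sRefl = -A₄ := by
  rw [sRefl_mul_mul_sRefl]; ext i j; fin_cases i <;> fin_cases j <;> simp [A₄]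

theorem sRefl_conj_A₅ : sRefl * A₅ * sRefl = A₅ := by
  rw [sRefl_mul_mul_sRefl]; ext i j; fin_cases i <;> fin_cases j <;> simp [A₅]

theorem sRefl_conj_A₆ : sRefl * A₆ * sRefl = -A₆ := by
  rw [sRefl_mul_mul_sRefl]; ext i j; fin_cases i <;> fin_cases j <;> simp [A₆]

theorem sRefl_conj_hRot (α : ℝ) : sRefl * hRot α * sRefl = hRot (-α) := by
  rw [sRefl_mul_mul_sRefl]; ext i j; fin_cases i <;> fin_cases j <;> simp [hRot]

/-- (i) Conjugation by the reflection `s` flips exactly the coefficients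
of `A₂, A₄, A₆` in `X = c₁·A₁ + ⋯ + c₆·A₆`; (ii) conjugation by `s` inverts the rotations
`h_α` about the z-axis: `s·h_α·s⁻¹ = h₋α`.  (Equation (15) of the paper, the core of
Lemma 2 on the reflectional symmetry of the logarithmic norm.) -/
theorem stmt_9 :
    (∀ c₁ c₂ c₃ c₄ c₅ c₆ : ℝ,
      sRefl * (c₁ • A₁ + c₂ • A₂ + c₃ • A₃ + c₄ • A₄ + c₅ • A₅ + c₆ • A₆) * sRefl⁻¹ =
        c₁ • A₁ - c₂ • A₂ + c₃ • A₃ - c₄ • A₄ + c₅ • A₅ - c₆ • A₆) ∧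
    (∀ α : ℝ, sRefl * hRot α * sRefl⁻¹ = hRot (-α)) := by
  rw [inv_sRefl]
  refine ⟨fun c₁ c₂ c₃ c₄ c₅ c₆ => ?_, sRefl_conj_hRot⟩
  simp only [Matrix.mul_add, Matrix.add_mul, Matrix.mul_smul, Matrix.smul_mul, sRefl_conj_A₁,
    sRefl_conj_A₂, sRefl_conj_A₃, sRefl_conj_A₄, sRefl_conj_A₅, sRefl_conj_A₆]
  module
end
end

section
/- The function f(q) := (1 − (q/2)·cot(q/2))/q² is strictly monotone increasing on the interval (0, π), i.e. for all q₁, q₂ with 0 < q₁ < q₂ < π one has f(q₁) < f(q₂). -/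
/-!
The Mittag-Leffler expansion `π cot (π x) = 1 / x + ∑_{n ≥ 1} 2x / (x² - n²)`, read at
`x = q / (2π)`, gives `f q = ∑_{n ≥ 1} 2 / ((2πn)² - q²)`. Every term is strictly increasing
in `q` on `(0, 2π)`, hence so is `f`.
-/

open Real

theorem Real.hasSum_pi_mul_cot_pi_mul_sub_inv {x : ℝ} (hx : ∀ n : ℤ, (n : ℝ) ≠ x) :
    HasSum (fun n : ℕ => 1 / (x - (n + 1)) + 1 / (x + (n + 1))) (π * cot (π * x) - 1 / x) := by
  have hz : (x : ℂ) ∈ Complex.integerComplement := by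
    rintro ⟨n, hn⟩
    exact hx n (mod_cast hn)
  rw [← Complex.hasSum_ofReal]
  push_cast
  rw [cot_series_rep' hz]
  exact (summable_cotTerm hz).hasSum

theorem Real.hasSum_one_sub_mul_cot_div_sq {q : ℝ} (hq : ∀ n : ℤ, 2 * π * n ≠ q) :
    HasSum (fun n : ℕ => 2 / ((2 * π * (n + 1)) ^ 2 - q ^ 2))
      ((1 - q / 2 * cot (q / 2)) / q ^ 2) := by
  obtain ⟨x, rfl⟩ : ∃ x : ℝ, 2 * π * x = q := ⟨q / (2 * π), by field_simp⟩
  have hx (n : ℤ) : (n : ℝ) ≠ x := fun h => hq n (h ▸ rfl)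
  have hx₀ : x ≠ 0 := by simpa using (hx 0).symm
  have hterm : (fun n : ℕ => 2 / ((2 * π * (n + 1)) ^ 2 - (2 * π * x) ^ 2)) =
      fun n : ℕ => -x / (2 * π * x) ^ 2 * (1 / (x - (n + 1)) + 1 / (x + (n + 1))) := by
    funext n
    have h₁ : x - (n + 1) ≠ 0 := sub_ne_zero.2 (by exact_mod_cast (hx (n + 1)).symm)
    have h₂ : x + (n + 1) ≠ 0 := by
      rw [← sub_neg_eq_add, sub_ne_zero]
      exact_mod_cast (hx (-(n + 1))).symm
    have h₃ : (n + 1) ^ 2 - x ^ 2 ≠ 0 := by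
      rw [show (n + 1 : ℝ) ^ 2 - x ^ 2 = -((x - (n + 1)) * (x + (n + 1))) by ring]
      exact neg_ne_zero.2 (mul_ne_zero h₁ h₂)
    field_simp
    ring
  have hsum : (1 - 2 * π * x / 2 * cot (2 * π * x / 2)) / (2 * π * x) ^ 2 =
      -x / (2 * π * x) ^ 2 * (π * cot (π * x) - 1 / x) := by
    rw [show 2 * π * x / 2 = π * x by ring]
    field_simp
    ring
  rw [hterm, hsum]
  exact (hasSum_pi_mul_cot_pi_mul_sub_inv hx).mul_left _

theorem Real.strictMonoOn_one_sub_mul_cot_div_sq :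
    StrictMonoOn (fun q : ℝ => (1 - q / 2 * cot (q / 2)) / q ^ 2) (Set.Ioo 0 (2 * π)) := by
  have hq_ne {q : ℝ} (hq : q ∈ Set.Ioo 0 (2 * π)) (n : ℤ) : 2 * π * n ≠ q := by
    intro hn
    have h₀ : (0 : ℝ) < n := by nlinarith [hq.1, pi_pos]
    have h₁ : (n : ℝ) < 1 := by nlinarith [hq.2, pi_pos]
    have : (0 : ℤ) < n ∧ n < 1 := ⟨mod_cast h₀, mod_cast h₁⟩
    omega
  intro q₁ hq₁ q₂ hq₂ hlt
  have hterm (n : ℕ) :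
      2 / ((2 * π * (n + 1)) ^ 2 - q₁ ^ 2) < 2 / ((2 * π * (n + 1)) ^ 2 - q₂ ^ 2) := by
    have h2π : 2 * π ≤ 2 * π * (n + 1) := by nlinarith [n.cast_nonneg (α := ℝ), pi_pos]
    apply div_lt_div_of_pos_left two_pos <;> nlinarith [hq₁.1, hq₂.2]
  exact hasSum_lt (fun n => (hterm n).le) (hterm 0)
    (hasSum_one_sub_mul_cot_div_sq (hq_ne hq₁)) (hasSum_one_sub_mul_cot_div_sq (hq_ne hq₂))

/-- The function `f(q) = (1 − (q/2)·cot(q/2))/q²`, appearing in the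
`SE(3)` logarithm formula (equation (16) of the paper), is strictly monotone increasing
on the interval `(0, π)`. -/
theorem stmt_12 :
    StrictMonoOn (fun q : ℝ => (1 - q / 2 * (cos (q / 2) / sin (q / 2))) / q ^ 2)
      (Set.Ioo 0 π) := by
  simp_rw [← cot_eq_cos_div_sin]
  exact strictMonoOn_one_sub_mul_cot_div_sq.mono (Set.Ioo_subset_Ioo_right (by linarith [pi_pos]))
end
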